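/- Suppose there exist ε > 0 and C > 0 such that for all sufficiently large n, ∏_{j=1}^{n−1} (1 + q_j^(M_j − φ(q_j))) ≤ C·(φ(q_n)·log q_n)^(1−ε). Then for every s > 1 − ε, the generalized Hausdorff measure H^{h_s} of E is zero, where h_s is the gauge h_s(r) = (log(1/r))^(−s) for small r > 0. In particular the logarithmic Hausdorff dimension of E is at most 1 − ε. -/

import Mathlib

open Filter Set Metric Pointwise

/-- The gauge `h_s(r) = (log(1/r))^(-s)` as a function `ℝ≥0∞ → ℝ≥0∞`, used to build
the generalized (logarithmic) Hausdorff measure via Carathéodory's metric construction. -/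
noncomputable def hGauge (s : ℝ) : ENNReal → ENNReal :=
  fun r => ENNReal.ofReal ((Real.log (1 / r.toReal)) ^ (-s))

/-!
At level `n` the set `E` lies within `r_n = q_n ^ (-φ q_n)` of those grid points `k / q_n` that
are within `r_n` of `E`; let `N_n` be their number. An interval of length `4 r_n` contains at
most `4 q_{n+1} r_n + 1 = 4 q_n ^ (M_n - φ q_n) + 1` points of the next grid, so
`N_n ≤ 3 · 4^n · ∏_{j<n} (1 + q_j ^ (M_j - φ q_j)) ≤ 3 C · 4^n · Y_n ^ (1 - ε)`, where
`Y_n = log (1 / r_n) = φ q_n · log q_n`. Covering `E` by the `2 N_n` halves of these balls costs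
`2 N_n Y_n ^ (-s) ≲ 4^n / Y_n ^ (s - (1 - ε))`, which tends to `0`: since `Y_{n+1} ≥ M_n Y_n`
and `M_n → ∞`, `Y_n` outgrows every geometric sequence. The same growth makes the hypothesis
impossible for `ε > 1`, its left side being at least `1`.
-/

open scoped ENNReal Topology

theorem MeasureTheory.Measure.mkMetric_eq_zero_of_subset_biUnion_closedBall
    {ι : Type*} {m : ℝ≥0∞ → ℝ≥0∞} {E : Set ℝ} {c : ℕ → Finset ι} {x : ℕ → ι → ℝ}
    {ρ : ℕ → ℝ} (hρ : Tendsto ρ atTop (𝓝 0))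
    (hcov : ∀ᶠ n in atTop, E ⊆ ⋃ i ∈ c n, closedBall (x n i) (ρ n))
    (hsum : Tendsto (fun n => (c n).card * m (ENNReal.ofReal (ρ n))) atTop (𝓝 0)) :
    mkMetric m E = 0 := by
  -- halves of the balls, so that the gauge is evaluated at `ρ n` rather than `2 * ρ n`
  set t : ∀ n, c n × Bool → Set ℝ := fun n p =>
    bif p.2 then Icc (x n p.1 - ρ n) (x n p.1) else Icc (x n p.1) (x n p.1 + ρ n)
  have hdiam : ∀ n p, ediam (t n p) = ENNReal.ofReal (ρ n) := by
    rintro n ⟨i, _ | _⟩ <;> simp [t, Real.ediam_Icc]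
  have hsub : ∀ᶠ n in atTop, E ⊆ ⋃ p, t n p := by
    filter_upwards [hcov] with n hn y hy
    obtain ⟨i, hi, hyi⟩ := mem_iUnion₂.1 (hn hy)
    rw [Real.closedBall_eq_Icc] at hyi
    rcases le_total y (x n i) with h | h
    · exact mem_iUnion.2 ⟨(⟨i, hi⟩, true), hyi.1, h⟩
    · exact mem_iUnion.2 ⟨(⟨i, hi⟩, false), h, hyi.2⟩
  have hρ' : Tendsto (fun n => ENNReal.ofReal (ρ n)) atTop (𝓝 0) := by
    simpa using ENNReal.tendsto_ofReal hρ
  refine le_antisymm ?_ zero_le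
  calc mkMetric m E ≤ liminf (fun n => ∑ p, m (ediam (t n p))) atTop :=
        mkMetric_le_liminf_sum E _ hρ' t (.of_forall fun n p => (hdiam n p).le) hsub m
    _ = liminf (fun n => 2 * ((c n).card * m (ENNReal.ofReal (ρ n)))) atTop := by
        simp only [hdiam, Finset.sum_const, Finset.card_univ, Fintype.card_prod,
          Fintype.card_coe, Fintype.card_bool, nsmul_eq_mul]
        congr! 2 with n
        push_cast
        ring
    _ = 0 := by simpa using (ENNReal.Tendsto.const_mul hsum (by simp)).liminf_eq

theorem tendsto_pow_div_atTop_zero_of_mul_le {u c : ℕ → ℝ} (hu : ∀ n, 0 < u n)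
    (hc : Tendsto c atTop atTop) (huc : ∀ n, c n * u n ≤ u (n + 1)) (b : ℝ) :
    Tendsto (fun n => b ^ n / u n) atTop (𝓝 0) := by
  refine (summable_of_ratio_norm_eventually_le (r := 1 / 2) (by norm_num) ?_).tendsto_atTop_zero
  filter_upwards [hc.eventually_ge_atTop (2 * |b| + 1)] with n hn
  have hun := hu n
  have hbu : (2 * |b| + 1) * u n ≤ u (n + 1) :=
    (mul_le_mul_of_nonneg_right hn hun.le).trans (huc n)
  rw [norm_div, norm_div, norm_pow, norm_pow, Real.norm_of_nonneg hun.le,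
    Real.norm_of_nonneg (hu (n + 1)).le, pow_succ, div_le_iff₀ (hu (n + 1))]
  calc |b| ^ n * |b| ≤ 1 / 2 * (|b| ^ n / u n) * ((2 * |b| + 1) * u n) := by
        field_simp
        nlinarith [pow_nonneg (abs_nonneg b) n, abs_nonneg b]
    _ ≤ 1 / 2 * (|b| ^ n / u n) * u (n + 1) := by gcongr

theorem Int.card_le_of_forall_abs_sub_le {S : Finset ℤ} {c R : ℝ} (hR : 0 ≤ R)
    (h : ∀ k ∈ S, |(k : ℝ) - c| ≤ R) : (S.card : ℝ) ≤ 2 * R + 1 := by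
  have hsub : S ⊆ Finset.Icc ⌈c - R⌉ ⌊c + R⌋ := fun k hk => by
    obtain ⟨h1, h2⟩ := abs_le.1 (h k hk)
    exact Finset.mem_Icc.2 ⟨Int.ceil_le.2 (by linarith), Int.le_floor.2 (by linarith)⟩
  have hlo : c - R ≤ ⌈c - R⌉ := Int.le_ceil _
  have hhi : (⌊c + R⌋ : ℝ) ≤ c + R := Int.floor_le _
  have hle : ⌈c - R⌉ ≤ ⌊c + R⌋ + 1 := by
    have : (⌈c - R⌉ : ℝ) < ⌊c + R⌋ + 2 := by
      linarith [Int.ceil_lt_add_one (c - R), Int.lt_floor_add_one (c + R)]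
    have : ⌈c - R⌉ < ⌊c + R⌋ + 2 := by exact_mod_cast this
    omega
  calc (S.card : ℝ) ≤ (Finset.Icc ⌈c - R⌉ ⌊c + R⌋).card := by
        exact_mod_cast Finset.card_le_card hsub
    _ = ⌊c + R⌋ + 1 - ⌈c - R⌉ := by
        rw [Int.card_Icc, ← Int.cast_natCast, Int.toNat_of_nonneg (by omega)]
        push_cast; ring
    _ ≤ 2 * R + 1 := by linarith

def grid (Q : ℕ) : Set ℝ := {x | ∃ k : ℤ, 0 ≤ k ∧ k ≤ (Q : ℤ) ∧ x = (k : ℝ) / (Q : ℝ)}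

theorem grid_eq_image (Q : ℕ) : grid Q = (fun k : ℤ => (k : ℝ) / Q) '' Icc 0 (Q : ℤ) := by
  ext x
  simp only [grid, mem_ofPred_eq, mem_image, mem_Icc]
  constructor
  · rintro ⟨k, h0, hQ, rfl⟩; exact ⟨k, ⟨h0, hQ⟩, rfl⟩
  · rintro ⟨k, ⟨h0, hQ⟩, rfl⟩; exact ⟨k, h0, hQ, rfl⟩

theorem exists_abs_sub_le_of_infDist_grid_le {Q : ℕ} {x ρ : ℝ} (h : infDist x (grid Q) ≤ ρ) :
    ∃ k ∈ Finset.Icc 0 (Q : ℤ), |x - k / Q| ≤ ρ := by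
  have hfin : (grid Q).Finite := grid_eq_image Q ▸ (finite_Icc _ _).image _
  have hne : (grid Q).Nonempty := ⟨0, 0, le_rfl, by positivity, by simp⟩
  obtain ⟨y, hy, hxy⟩ := hfin.isCompact.exists_infDist_eq_dist hne x
  obtain ⟨k, h0, hQ, rfl⟩ := hy
  exact ⟨k, Finset.mem_Icc.2 ⟨h0, hQ⟩, by rwa [← Real.dist_eq, ← hxy]⟩

open Classical in
noncomputable def gridNbhd (E : Set ℝ) (Q : ℕ) (ρ : ℝ) : Finset ℤ :=
  {k ∈ Finset.Icc 0 (Q : ℤ) | ∃ x ∈ E, |x - k / Q| ≤ ρ}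

section gridNbhd

variable {E : Set ℝ} {Q : ℕ} {ρ : ℝ}

theorem card_gridNbhd_le : (gridNbhd E Q ρ).card ≤ Q + 1 := by
  classical
  calc (gridNbhd E Q ρ).card ≤ (Finset.Icc 0 (Q : ℤ)).card := Finset.card_filter_le _ _
    _ = Q + 1 := by simp

theorem subset_biUnion_gridNbhd (hE : ∀ x ∈ E, infDist x (grid Q) ≤ ρ) :
    E ⊆ ⋃ k ∈ gridNbhd E Q ρ, closedBall ((k : ℝ) / Q) ρ := by
  classical
  intro x hx
  obtain ⟨k, hk, hxk⟩ := exists_abs_sub_le_of_infDist_grid_le (hE x hx)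
  refine mem_iUnion₂.2 ⟨k, Finset.mem_filter.2 ⟨hk, x, hx, hxk⟩, ?_⟩
  rwa [mem_closedBall, Real.dist_eq]

theorem card_gridNbhd_le_mul {Q' : ℕ} {ρ' : ℝ} (hQ' : 0 < Q') (hρ : 0 ≤ ρ) (hρ' : 0 ≤ ρ')
    (hE : ∀ x ∈ E, infDist x (grid Q) ≤ ρ) :
    ((gridNbhd E Q' ρ').card : ℝ) ≤ (gridNbhd E Q ρ).card * (2 * Q' * (ρ + ρ') + 1) := by
  classical
  set S := gridNbhd E Q ρ
  set S' := gridNbhd E Q' ρ'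
  set F : ℤ → Finset ℤ := fun j => {k ∈ S' | |(k : ℝ) / Q' - j / Q| ≤ ρ + ρ'}
  have hQ'pos : (0 : ℝ) < Q' := by exact_mod_cast hQ'
  have hcover : S' ⊆ S.biUnion F := by
    intro k hk
    obtain ⟨x, hx, hxk⟩ := (Finset.mem_filter.1 hk).2
    obtain ⟨j, hj, hxj⟩ := mem_iUnion₂.1 (subset_biUnion_gridNbhd hE hx)
    rw [mem_closedBall, Real.dist_eq] at hxj
    refine Finset.mem_biUnion.2 ⟨j, hj, Finset.mem_filter.2 ⟨hk, ?_⟩⟩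
    linarith [abs_sub_le ((k : ℝ) / Q') x (j / Q), abs_sub_comm ((k : ℝ) / Q') x]
  have hfiber : ∀ j, ((F j).card : ℝ) ≤ 2 * Q' * (ρ + ρ') + 1 := by
    intro j
    have := Int.card_le_of_forall_abs_sub_le (S := F j) (c := Q' * (j / Q))
      (R := Q' * (ρ + ρ')) (by positivity) fun k hk => by
        have hk := (Finset.mem_filter.1 hk).2
        rw [show (k : ℝ) - Q' * (j / Q) = Q' * (k / Q' - j / Q) by field_simp, abs_mul,
          abs_of_pos hQ'pos]
        exact mul_le_mul_of_nonneg_left hk hQ'pos.le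
    linarith
  calc (S'.card : ℝ) ≤ ∑ j ∈ S, ((F j).card : ℝ) := by
        exact_mod_cast (Finset.card_le_card hcover).trans Finset.card_biUnion_le
    _ ≤ S.card * (2 * Q' * (ρ + ρ') + 1) := by
        simpa only [nsmul_eq_mul] using Finset.sum_le_card_nsmul S _ _ fun j _ => hfiber j

end gridNbhd

theorem le_mul_prod_range_of_le_mul {a b : ℕ → ℝ} {c : ℝ} (h0 : a 0 ≤ c)
    (hb : ∀ n, 0 ≤ b n) (hab : ∀ n, a (n + 1) ≤ a n * b n) (n : ℕ) :
    a n ≤ c * ∏ j ∈ Finset.range n, b j := by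
  induction n with
  | zero => simpa using h0
  | succ n ih =>
    rw [Finset.prod_range_succ, ← mul_assoc]
    exact (hab n).trans (mul_le_mul_of_nonneg_right ih (hb n))

/-- `Real.log (1 / r)` for the radius `r = Q ^ (-φ Q)`. -/
noncomputable def logInvRadius (φ : ℝ → ℝ) (Q : ℕ) : ℝ := φ Q * Real.log Q

theorem rpow_neg_eq_exp_neg_logInvRadius (φ : ℝ → ℝ) {Q : ℕ} (hQ : 0 < Q) :
    (Q : ℝ) ^ (-φ Q) = Real.exp (-logInvRadius φ Q) := by
  rw [Real.rpow_def_of_pos (by exact_mod_cast hQ), logInvRadius]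
  ring_nf

theorem hGauge_ofReal_rpow_neg (s : ℝ) (φ : ℝ → ℝ) {Q : ℕ} (hQ : 0 < Q) :
    hGauge s (ENNReal.ofReal ((Q : ℝ) ^ (-φ Q))) = ENNReal.ofReal (logInvRadius φ Q ^ (-s)) := by
  rw [hGauge, ENNReal.toReal_ofReal (by positivity), rpow_neg_eq_exp_neg_logInvRadius φ hQ,
    one_div, ← Real.exp_neg, neg_neg, Real.log_exp]

section Tower

variable {M q : ℕ → ℕ} {φ : ℝ → ℝ}

theorem le_succ_of_pow_rec (hMpos : ∀ i, 0 < M i) (hqrec : ∀ i, q (i + 1) = q i ^ M i) (n : ℕ) :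
    q n ≤ q (n + 1) :=
  hqrec n ▸ Nat.le_self_pow (hMpos n).ne' _

theorem two_le_of_pow_rec (hMpos : ∀ i, 0 < M i) (hq0 : q 0 = 2)
    (hqrec : ∀ i, q (i + 1) = q i ^ M i) (n : ℕ) : 2 ≤ q n := by
  induction n with
  | zero => exact hq0.ge
  | succ n ih => exact ih.trans (le_succ_of_pow_rec hMpos hqrec n)

theorem logInvRadius_pos (hφpos : ∀ t : ℝ, 2 ≤ t → 0 < φ t) {Q : ℕ} (hQ : 2 ≤ Q) :
    0 < logInvRadius φ Q :=
  mul_pos (hφpos _ (by exact_mod_cast hQ)) (Real.log_pos (by exact_mod_cast hQ))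

theorem mul_logInvRadius_le_succ (hMpos : ∀ i, 0 < M i) (hq0 : q 0 = 2)
    (hqrec : ∀ i, q (i + 1) = q i ^ M i) (hφmono : MonotoneOn φ (Ici 2)) (n : ℕ) :
    M n * logInvRadius φ (q n) ≤ logInvRadius φ (q (n + 1)) := by
  have hq : (2 : ℝ) ≤ q n := by exact_mod_cast two_le_of_pow_rec hMpos hq0 hqrec n
  have hqq : (q n : ℝ) ≤ q (n + 1) := by exact_mod_cast le_succ_of_pow_rec hMpos hqrec n
  have hφ : φ (q n) ≤ φ (q (n + 1)) := hφmono hq (hq.trans hqq) hqq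
  have hlog : Real.log (q (n + 1)) = M n * Real.log (q n) := by
    rw [hqrec, Nat.cast_pow, Real.log_pow]
  have hlogq : 0 ≤ Real.log (q n) := Real.log_nonneg (by linarith)
  rw [logInvRadius, logInvRadius, hlog, mul_left_comm]
  exact mul_le_mul_of_nonneg_right hφ (by positivity)

theorem tendsto_pow_div_logInvRadius_rpow (hMpos : ∀ i, 0 < M i) (hMtop : Tendsto M atTop atTop)
    (hq0 : q 0 = 2) (hqrec : ∀ i, q (i + 1) = q i ^ M i) (hφpos : ∀ t : ℝ, 2 ≤ t → 0 < φ t)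
    (hφmono : MonotoneOn φ (Ici 2)) {δ : ℝ} (hδ : 0 < δ) (b : ℝ) :
    Tendsto (fun n => b ^ n / logInvRadius φ (q n) ^ δ) atTop (𝓝 0) := by
  have hpos n := logInvRadius_pos hφpos (two_le_of_pow_rec hMpos hq0 hqrec n)
  refine tendsto_pow_div_atTop_zero_of_mul_le (fun n => Real.rpow_pos_of_pos (hpos n) δ)
    ((tendsto_rpow_atTop hδ).comp (tendsto_natCast_atTop_atTop.comp hMtop)) (fun n => ?_) b
  rw [Function.comp_apply, Function.comp_apply, ← Real.mul_rpow (by positivity) (hpos n).le]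
  exact Real.rpow_le_rpow (by positivity [hpos n])
    (mul_logInvRadius_le_succ hMpos hq0 hqrec hφmono n) hδ.le

end Tower

section Covering

variable {M q : ℕ → ℕ} {φ : ℝ → ℝ} {E : Set ℝ}

theorem card_gridNbhd_le_pow_mul_prod (hMpos : ∀ i, 0 < M i) (hq0 : q 0 = 2)
    (hqrec : ∀ i, q (i + 1) = q i ^ M i) (hφpos : ∀ t : ℝ, 2 ≤ t → 0 < φ t)
    (hφmono : MonotoneOn φ (Ici 2))
    (hE : ∀ n, ∀ x ∈ E, infDist x (grid (q n)) ≤ (q n : ℝ) ^ (-φ (q n))) (n : ℕ) :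
    ((gridNbhd E (q n) ((q n : ℝ) ^ (-φ (q n)))).card : ℝ) ≤
      3 * 4 ^ n * ∏ j ∈ Finset.range n, (1 + (q j : ℝ) ^ ((M j : ℝ) - φ (q j))) := by
  set r : ℕ → ℝ := fun n => (q n : ℝ) ^ (-φ (q n))
  have hq n : 0 < q n := (two_le_of_pow_rec hMpos hq0 hqrec n).trans_lt' two_pos
  have hr_succ n : r (n + 1) ≤ r n := by
    have hY := logInvRadius_pos hφpos (two_le_of_pow_rec hMpos hq0 hqrec n)
    have hM : (1 : ℝ) ≤ M n := by exact_mod_cast hMpos n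
    simp only [r, rpow_neg_eq_exp_neg_logInvRadius φ (hq _), Real.exp_le_exp, neg_le_neg_iff]
    nlinarith [mul_logInvRadius_le_succ hMpos hq0 hqrec hφmono n]
  have hqr n : (q (n + 1) : ℝ) * r n = (q n : ℝ) ^ ((M n : ℝ) - φ (q n)) := by
    rw [hqrec, Nat.cast_pow, ← Real.rpow_natCast, ← Real.rpow_add (by exact_mod_cast hq n),
      sub_eq_add_neg]
  have hstep n : ((gridNbhd E (q (n + 1)) (r (n + 1))).card : ℝ) ≤
      (gridNbhd E (q n) (r n)).card * (4 * (1 + (q n : ℝ) ^ ((M n : ℝ) - φ (q n)))) := by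
    have hr n : 0 ≤ r n := by positivity
    refine (card_gridNbhd_le_mul (hq _) (hr n) (hr _) (hE n)).trans ?_
    gcongr
    have := mul_le_mul_of_nonneg_left (hr_succ n) (Nat.cast_nonneg (q (n + 1)))
    nlinarith [hqr n]
  have h0 : ((gridNbhd E (q 0) (r 0)).card : ℝ) ≤ 3 := by
    have := card_gridNbhd_le (E := E) (Q := q 0) (ρ := r 0)
    rw [hq0] at this ⊢
    exact_mod_cast this
  calc ((gridNbhd E (q n) (r n)).card : ℝ)
      ≤ 3 * ∏ j ∈ Finset.range n, 4 * (1 + (q j : ℝ) ^ ((M j : ℝ) - φ (q j))) :=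
        le_mul_prod_range_of_le_mul (a := fun n => ((gridNbhd E (q n) (r n)).card : ℝ)) h0
          (fun j => by positivity) hstep n
    _ = _ := by rw [Finset.prod_mul_distrib, Finset.prod_const, Finset.card_range, mul_assoc]

theorem le_one_of_eventually_prod_le (hMpos : ∀ i, 0 < M i) (hMtop : Tendsto M atTop atTop)
    (hq0 : q 0 = 2) (hqrec : ∀ i, q (i + 1) = q i ^ M i) (hφpos : ∀ t : ℝ, 2 ≤ t → 0 < φ t)
    (hφmono : MonotoneOn φ (Ici 2)) {ε C : ℝ}
    (hbound : ∀ᶠ k in atTop, ∏ j ∈ Finset.range k, (1 + (q j : ℝ) ^ ((M j : ℝ) - φ (q j))) ≤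
      C * logInvRadius φ (q k) ^ (1 - ε)) :
    ε ≤ 1 := by
  by_contra! hε
  have hsmall : Tendsto (fun n => C * ((1 : ℝ) ^ n / logInvRadius φ (q n) ^ (ε - 1))) atTop
      (𝓝 (C * 0)) :=
    (tendsto_pow_div_logInvRadius_rpow hMpos hMtop hq0 hqrec hφpos hφmono (sub_pos.2 hε)
      1).const_mul C
  obtain ⟨n, hn, hlt⟩ :=
    (hbound.and ((mul_zero C ▸ hsmall).eventually (gt_mem_nhds one_pos))).exists
  have hY := logInvRadius_pos hφpos (two_le_of_pow_rec hMpos hq0 hqrec n)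
  have hprod : 1 ≤ ∏ j ∈ Finset.range n, (1 + (q j : ℝ) ^ ((M j : ℝ) - φ (q j))) :=
    Finset.one_le_prod fun j _ => le_add_of_nonneg_right (by positivity)
  rw [one_pow, one_div, ← Real.rpow_neg hY.le, neg_sub] at hlt
  linarith

theorem mkMetric_hGauge_eq_zero (hMpos : ∀ i, 0 < M i) (hMtop : Tendsto M atTop atTop)
    (hq0 : q 0 = 2) (hqrec : ∀ i, q (i + 1) = q i ^ M i) (hφpos : ∀ t : ℝ, 2 ≤ t → 0 < φ t)
    (hφmono : MonotoneOn φ (Ici 2))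
    (hE : ∀ n, ∀ x ∈ E, infDist x (grid (q n)) ≤ (q n : ℝ) ^ (-φ (q n))) {ε C s : ℝ}
    (hbound : ∀ᶠ k in atTop, ∏ j ∈ Finset.range k, (1 + (q j : ℝ) ^ ((M j : ℝ) - φ (q j))) ≤
      C * logInvRadius φ (q k) ^ (1 - ε))
    (hs : 1 - ε < s) :
    MeasureTheory.Measure.mkMetric (hGauge s) E = 0 := by
  set Y : ℕ → ℝ := fun n => logInvRadius φ (q n)
  set r : ℕ → ℝ := fun n => (q n : ℝ) ^ (-φ (q n))
  set K : ℕ → Finset ℤ := fun n => gridNbhd E (q n) (r n)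
  have hq n : 0 < q n := (two_le_of_pow_rec hMpos hq0 hqrec n).trans_lt' two_pos
  have hY n : 0 < Y n := logInvRadius_pos hφpos (two_le_of_pow_rec hMpos hq0 hqrec n)
  have hdecay {δ : ℝ} (hδ : 0 < δ) (b : ℝ) :=
    tendsto_pow_div_logInvRadius_rpow hMpos hMtop hq0 hqrec hφpos hφmono hδ b
  have hr : Tendsto r atTop (𝓝 0) := by
    have hYinv : Tendsto (fun n => (Y n)⁻¹) atTop (𝓝 0) := by simpa using hdecay one_pos 1
    refine tendsto_of_tendsto_of_tendsto_of_le_of_le tendsto_const_nhds hYinv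
      (fun n => by positivity) fun n => ?_
    simp only [r, rpow_neg_eq_exp_neg_logInvRadius φ (hq n), Real.exp_neg]
    exact inv_anti₀ (hY n) ((le_add_of_nonneg_right zero_le_one).trans (Real.add_one_le_exp _))
  have hsum : Tendsto (fun n => ((K n).card : ℝ) * Y n ^ (-s)) atTop (𝓝 0) := by
    have hδ : 0 < s - (1 - ε) := sub_pos.2 hs
    have hlim := (hdecay hδ 4).const_mul (3 * C)
    rw [mul_zero] at hlim
    refine tendsto_of_tendsto_of_tendsto_of_le_of_le' tendsto_const_nhds hlim
      (.of_forall fun n => mul_nonneg (Nat.cast_nonneg _) (Real.rpow_nonneg (hY n).le _)) ?_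
    filter_upwards [hbound] with n hn
    have hK := card_gridNbhd_le_pow_mul_prod hMpos hq0 hqrec hφpos hφmono hE n
    calc ((K n).card : ℝ) * Y n ^ (-s) ≤ 3 * 4 ^ n * (C * Y n ^ (1 - ε)) * Y n ^ (-s) := by
          refine mul_le_mul_of_nonneg_right (hK.trans ?_) (Real.rpow_nonneg (hY n).le _)
          exact mul_le_mul_of_nonneg_left hn (by positivity)
      _ = 3 * C * (4 ^ n / Y n ^ (s - (1 - ε))) := by
          rw [div_eq_mul_inv, ← Real.rpow_neg (hY n).le,
            show -(s - (1 - ε)) = (1 - ε) + -s by ring, Real.rpow_add (hY n)]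
          ring
  refine MeasureTheory.Measure.mkMetric_eq_zero_of_subset_biUnion_closedBall (c := K)
    (x := fun n k => (k : ℝ) / q n) hr (.of_forall fun n => subset_biUnion_gridNbhd (hE n)) ?_
  have hterm n : ((K n).card : ℝ≥0∞) * hGauge s (ENNReal.ofReal (r n)) =
      ENNReal.ofReal ((K n).card * Y n ^ (-s)) := by
    rw [hGauge_ofReal_rpow_neg s φ (hq n), ENNReal.ofReal_mul (Nat.cast_nonneg _),
      ENNReal.ofReal_natCast]
  simpa [hterm] using ENNReal.tendsto_ofReal hsum

end Covering

theorem falconer_log_hausdorff_dim_le_general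
    (M : ℕ → ℕ) (hMpos : ∀ i, 0 < M i)
    (hMtop : Tendsto M atTop atTop)
    (q : ℕ → ℕ) (hq0 : q 0 = 2) (hqrec : ∀ i, q (i + 1) = q i ^ M i)
    (φ : ℝ → ℝ) (hφpos : ∀ t : ℝ, 2 ≤ t → 0 < φ t)
    (hφmono : MonotoneOn φ (Set.Ici (2 : ℝ)))
    (G : ℕ → Set ℝ)
    (hG : ∀ i, G i = {x : ℝ | ∃ k : ℤ, 0 ≤ k ∧ k ≤ (q i : ℤ) ∧ x = (k : ℝ) / (q i : ℝ)})
    (r : ℕ → ℝ) (hr : ∀ i, r i = (q i : ℝ) ^ (-φ ((q i : ℕ) : ℝ)))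
    (Ei : ℕ → Set ℝ)
    (hEi : ∀ i, Ei i = {x ∈ Set.Icc (0 : ℝ) 1 | Metric.infDist x (G i) ≤ r i})
    (E : Set ℝ) (hE : E = ⋂ i, Ei i)
    (ε C : ℝ)
    (hbound : ∀ᶠ k in atTop,
      ∏ j ∈ Finset.range k, (1 + (q j : ℝ) ^ ((M j : ℝ) - φ ((q j : ℕ) : ℝ))) ≤
        C * (φ ((q k : ℕ) : ℝ) * Real.log (q k : ℝ)) ^ ((1 : ℝ) - ε)) :
    (∀ s : ℝ, 1 - ε < s → MeasureTheory.Measure.mkMetric (hGauge s) E = 0) ∧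
      sInf {s : ℝ | 0 < s ∧ MeasureTheory.Measure.mkMetric (hGauge s) E = 0} ≤ 1 - ε := by
  have hE' : ∀ n, ∀ x ∈ E, infDist x (grid (q n)) ≤ (q n : ℝ) ^ (-φ (q n)) := by
    intro n x hx
    rw [hE, mem_iInter] at hx
    have hxn := hx n
    rw [hEi, hG, hr] at hxn
    exact hxn.2
  have hzero : ∀ s : ℝ, 1 - ε < s → MeasureTheory.Measure.mkMetric (hGauge s) E = 0 :=
    fun s hs => mkMetric_hGauge_eq_zero hMpos hMtop hq0 hqrec hφpos hφmono hE' hbound hs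
  have hε1 : ε ≤ 1 := le_one_of_eventually_prod_le hMpos hMtop hq0 hqrec hφpos hφmono hbound
  refine ⟨hzero, ?_⟩
  calc sInf {s : ℝ | 0 < s ∧ MeasureTheory.Measure.mkMetric (hGauge s) E = 0}
      ≤ sInf (Ioi (1 - ε)) :=
        csInf_le_csInf ⟨0, fun _ hs => hs.1.le⟩ nonempty_Ioi fun s hs =>
          ⟨by linarith [mem_Ioi.1 hs], hzero s hs⟩
    _ = 1 - ε := csInf_Ioi

/-- Small logarithmic Hausdorff dimension. If
`∏_{j=1}^{n-1} (1 + q_j^{M_j - φ(q_j)}) ≤ C (φ(q_n) log q_n)^{1-ε}` for all sufficiently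
large `n` (restated with 0-based indices), then `H^{h_s}(E) = 0` for every `s > 1 - ε`;
in particular the logarithmic Hausdorff dimension of `E` is at most `1 - ε`. -/
theorem falconer_log_hausdorff_dim_le
    (M : ℕ → ℕ) (hMpos : ∀ i, 0 < M i) (hMmono : Monotone M)
    (hMtop : Tendsto M atTop atTop)
    (q : ℕ → ℕ) (hq0 : q 0 = 2) (hqrec : ∀ i, q (i + 1) = q i ^ M i)
    (φ : ℝ → ℝ) (hφpos : ∀ t : ℝ, 2 ≤ t → 0 < φ t)
    (hφmono : MonotoneOn φ (Set.Ici (2 : ℝ)))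
    (hφtop : Tendsto φ atTop atTop)
    (G : ℕ → Set ℝ)
    (hG : ∀ i, G i = {x : ℝ | ∃ k : ℤ, 0 ≤ k ∧ k ≤ (q i : ℤ) ∧ x = (k : ℝ) / (q i : ℝ)})
    (r : ℕ → ℝ) (hr : ∀ i, r i = (q i : ℝ) ^ (-φ ((q i : ℕ) : ℝ)))
    (Ei : ℕ → Set ℝ)
    (hEi : ∀ i, Ei i = {x ∈ Set.Icc (0 : ℝ) 1 | Metric.infDist x (G i) ≤ r i})
    (E : Set ℝ) (hE : E = ⋂ i, Ei i)
    (ε C : ℝ) (hε : 0 < ε) (hC : 0 < C)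
    (hbound : ∀ᶠ k in atTop,
      ∏ j ∈ Finset.range k, (1 + (q j : ℝ) ^ ((M j : ℝ) - φ ((q j : ℕ) : ℝ))) ≤
        C * (φ ((q k : ℕ) : ℝ) * Real.log (q k : ℝ)) ^ ((1 : ℝ) - ε)) :
    (∀ s : ℝ, 1 - ε < s → MeasureTheory.Measure.mkMetric (hGauge s) E = 0) ∧
      sInf {s : ℝ | 0 < s ∧ MeasureTheory.Measure.mkMetric (hGauge s) E = 0} ≤ 1 - ε :=
  falconer_log_hausdorff_dim_le_general M hMpos hMtop q hq0 hqrec φ hφpos hφmono G hG r hr Ei hEi E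
    hE ε C hbound
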